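/- On Φ(Ω), the family of coherent sets of gambles together with L(Ω), with combination D₁·D₂ := C(D₁ ∪ D₂) and extraction ε_x(D) := C(D ∩ L_x), the extraction operator satisfies the existential quantifier axioms: (1) ε_x(L(Ω)) = L(Ω); (2) ε_x(D)·D = D; (3) ε_x(ε_x(D₁)·D₂) = ε_x(D₁)·ε_x(D₂). -/
import Mathlib


/-- A gamble is a bounded function. -/
def Bdd {Ω : Type*} (f : Ω → ℝ) : Prop := ∃ M : ℝ, ∀ ω, |f ω| ≤ M

/-- The set of all gambles (bounded functions) on `Ω`. -/
def L (Ω : Type*) : Set (Ω → ℝ) := {f | Bdd f}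

/-- Nonnegative, nonzero gambles. -/
def Lpos (Ω : Type*) : Set (Ω → ℝ) := {f | Bdd f ∧ 0 ≤ f ∧ f ≠ 0}

/-- Coherent set of desirable gambles. -/
def Coherent {Ω : Type*} (D : Set (Ω → ℝ)) : Prop :=
  D ⊆ L Ω ∧ Lpos Ω ⊆ D ∧ (0 : Ω → ℝ) ∉ D ∧
  (∀ f g : Ω → ℝ, f ∈ D → g ∈ D → f + g ∈ D) ∧
  (∀ (c : ℝ) (f : Ω → ℝ), f ∈ D → 0 < c → c • f ∈ D)

/-- `Φ(Ω)`: coherent sets together with the set of all gambles. -/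
def Phi (Ω : Type*) : Set (Set (Ω → ℝ)) := {D | Coherent D} ∪ {L Ω}

/-- Closure operator associated to the topped ∩-structure `Φ`. -/
def Cl {Ω : Type*} (A : Set (Ω → ℝ)) : Set (Ω → ℝ) :=
  ⋂₀ {D | D ∈ Phi Ω ∧ A ⊆ D}

/-- `f` is `x`-measurable: constant on blocks of the partition of `x`. -/
def Meas {Ω : Type*} (x : Setoid Ω) (f : Ω → ℝ) : Prop :=
  ∀ a b : Ω, x.r a b → f a = f b

/-- `L_x`: the linear space of `x`-measurable gambles. -/
def Lx {Ω : Type*} (x : Setoid Ω) : Set (Ω → ℝ) := {f | Bdd f ∧ Meas x f}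

/-- Combination: `D₁ · D₂ := C(D₁ ∪ D₂)`. -/
def comb {Ω : Type*} (D₁ D₂ : Set (Ω → ℝ)) : Set (Ω → ℝ) := Cl (D₁ ∪ D₂)

/-- Extraction: `ε_x(D) := C(D ∩ L_x)`. -/
def eps {Ω : Type*} (x : Setoid Ω) (D : Set (Ω → ℝ)) : Set (Ω → ℝ) :=
  Cl (D ∩ Lx x)

section Aux
variable {Ω : Type*}

lemma Bdd_zero : Bdd (0 : Ω → ℝ) := ⟨0, fun ω => by simp⟩

lemma Bdd_add {f g : Ω → ℝ} (hf : Bdd f) (hg : Bdd g) : Bdd (f + g) := by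
  obtain ⟨M, hM⟩ := hf; obtain ⟨N, hN⟩ := hg
  exact ⟨M + N, fun ω => (abs_add_le _ _).trans (add_le_add (hM ω) (hN ω))⟩

lemma Bdd_smul (c : ℝ) {f : Ω → ℝ} (hf : Bdd f) : Bdd (c • f) := by
  obtain ⟨M, hM⟩ := hf
  exact ⟨|c| * M, fun ω => by
    simp only [Pi.smul_apply, smul_eq_mul, abs_mul]
    exact mul_le_mul_of_nonneg_left (hM ω) (abs_nonneg c)⟩

lemma L_mem_Phi : L Ω ∈ Phi Ω := Or.inr rfl

lemma Phi_subset_L {D : Set (Ω → ℝ)} (hD : D ∈ Phi Ω) : D ⊆ L Ω := by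
  rcases hD with h | h
  · exact h.1
  · rw [Set.mem_singleton_iff] at h; rw [h]

lemma subset_Cl {A : Set (Ω → ℝ)} : A ⊆ Cl A :=
  fun f hf E hE => hE.2 hf

lemma Cl_mono {A B : Set (Ω → ℝ)} (h : A ⊆ B) : Cl A ⊆ Cl B :=
  fun f hf E hE => hf E ⟨hE.1, h.trans hE.2⟩

lemma Cl_subset_mem {A D : Set (Ω → ℝ)} (hD : D ∈ Phi Ω) (hAD : A ⊆ D) :
    Cl A ⊆ D := fun f hf => hf D ⟨hD, hAD⟩

lemma Cl_mem_eq {D : Set (Ω → ℝ)} (hD : D ∈ Phi Ω) : Cl D = D :=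
  Set.Subset.antisymm (Cl_subset_mem hD subset_rfl) subset_Cl

lemma Cl_subset_L {A : Set (Ω → ℝ)} (hA : A ⊆ L Ω) : Cl A ⊆ L Ω :=
  Cl_subset_mem L_mem_Phi hA

lemma Lpos_subset_mem {D : Set (Ω → ℝ)} (hD : D ∈ Phi Ω) : Lpos Ω ⊆ D := by
  rcases hD with h | h
  · exact h.2.1
  · rw [Set.mem_singleton_iff] at h; rw [h]; exact fun f hf => hf.1

lemma Cl_mem_Phi {A : Set (Ω → ℝ)} (hA : A ⊆ L Ω) : Cl A ∈ Phi Ω := by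
  by_cases hex : ∃ D : Set (Ω → ℝ), Coherent D ∧ A ⊆ D
  · obtain ⟨D₀, hD₀, hAD₀⟩ := hex
    left
    refine ⟨Cl_subset_L hA, ?_, ?_, ?_, ?_⟩
    · exact fun f hf E hE => Lpos_subset_mem hE.1 hf
    · exact fun h0 => hD₀.2.2.1 (h0 D₀ ⟨Or.inl hD₀, hAD₀⟩)
    · intro f g hf hg E hE
      rcases hE.1 with h | h
      · exact h.2.2.2.1 f g (hf E hE) (hg E hE)
      · rw [Set.mem_singleton_iff] at h; rw [h]
        have hf' : f ∈ L Ω := h ▸ hf E hE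
        have hg' : g ∈ L Ω := h ▸ hg E hE
        exact Bdd_add hf' hg'
    · intro c f hf hc E hE
      rcases hE.1 with h | h
      · exact h.2.2.2.2 c f (hf E hE) hc
      · rw [Set.mem_singleton_iff] at h; rw [h]
        have hf' : f ∈ L Ω := h ▸ hf E hE
        exact Bdd_smul c hf'
  · right
    rw [Set.mem_singleton_iff]
    refine Set.Subset.antisymm (Cl_subset_L hA) ?_
    intro f hf E hE
    rcases hE.1 with h | h
    · exact absurd ⟨E, h, hE.2⟩ hex
    · rw [Set.mem_singleton_iff] at h; rw [h]; exact hf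

lemma Cl_union_Cl {A B : Set (Ω → ℝ)} (hA : A ⊆ L Ω) (hB : B ⊆ L Ω) :
    Cl (Cl A ∪ Cl B) = Cl (A ∪ B) := by
  refine Set.Subset.antisymm ?_ (Cl_mono (Set.union_subset_union subset_Cl subset_Cl))
  exact Cl_subset_mem (Cl_mem_Phi (Set.union_subset hA hB))
    (Set.union_subset (Cl_mono Set.subset_union_left) (Cl_mono Set.subset_union_right))

lemma Lx_subset_L (x : Setoid Ω) : Lx x ⊆ L Ω := fun f hf => hf.1

lemma zero_mem_Lx (x : Setoid Ω) : (0 : Ω → ℝ) ∈ Lx x :=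
  ⟨Bdd_zero, fun a b _ => rfl⟩

lemma Cl_Lx (x : Setoid Ω) : Cl (Lx x) = L Ω := by
  refine Set.Subset.antisymm (Cl_subset_L (Lx_subset_L x)) ?_
  intro f hf E hE
  rcases hE.1 with h | h
  · exact absurd (hE.2 (zero_mem_Lx x)) h.2.2.1
  · rw [Set.mem_singleton_iff] at h; rw [h]; exact hf

end Aux

section MoreAux
variable {Ω : Type*}

lemma Bdd_neg {f : Ω → ℝ} (hf : Bdd f) : Bdd (-f) := by
  obtain ⟨M, hM⟩ := hf
  exact ⟨M, fun ω => by simpa using hM ω⟩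

end MoreAux


/-- The extraction operator on `Φ` is an existential quantifier. -/
theorem stmt13 {Ω : Type*} (x : Setoid Ω) (D D₁ D₂ : Set (Ω → ℝ))
    (hD : D ∈ Phi Ω) (h₁ : D₁ ∈ Phi Ω) (h₂ : D₂ ∈ Phi Ω) :
    eps x (L Ω) = L Ω ∧
    comb (eps x D) D = D ∧
    eps x (comb (eps x D₁) D₂) = comb (eps x D₁) (eps x D₂) := by
  refine ⟨?_, ?_, ?_⟩
  · show Cl (L Ω ∩ Lx x) = L Ω
    rw [Set.inter_eq_right.mpr (Lx_subset_L x)]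
    exact Cl_Lx x
  · show Cl (Cl (D ∩ Lx x) ∪ D) = D
    refine Set.Subset.antisymm ?_ (Set.subset_union_right.trans subset_Cl)
    exact Cl_subset_mem hD
      (Set.union_subset (Cl_subset_mem hD Set.inter_subset_left) subset_rfl)
  · set A := D₁ ∩ Lx x with hAdef
    set M := D₂ ∩ Lx x with hMdef
    have hAL : A ⊆ L Ω := Set.inter_subset_left.trans (Phi_subset_L h₁)
    have hML : M ⊆ L Ω := Set.inter_subset_left.trans (Phi_subset_L h₂)
    have hD₂L : D₂ ⊆ L Ω := Phi_subset_L h₂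
    show Cl (Cl (Cl A ∪ D₂) ∩ Lx x) = Cl (Cl A ∪ Cl M)
    rw [Cl_union_Cl hAL hML]
    have hT : Cl (Cl A ∪ D₂) = Cl (A ∪ D₂) := by
      conv_lhs => rw [← Cl_mem_eq h₂]
      exact Cl_union_Cl hAL hD₂L
    rw [hT]
    set R := Cl (A ∪ M) with hRdef
    have hRPhi : R ∈ Phi Ω := Cl_mem_Phi (Set.union_subset hAL hML)
    refine Set.Subset.antisymm ?_ ?_
    · refine Cl_subset_mem hRPhi ?_
      rcases hRPhi with hRcoh | hRtop
      · -- R is coherent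
        -- D₁ and D₂ are coherent
        have h0Lx : (0 : Ω → ℝ) ∈ Lx x := zero_mem_Lx x
        have hD₁c : Coherent D₁ := by
          rcases h₁ with h | h
          · exact h
          · exfalso
            rw [Set.mem_singleton_iff] at h
            have : (0 : Ω → ℝ) ∈ A := ⟨h ▸ Bdd_zero, h0Lx⟩
            exact hRcoh.2.2.1 (subset_Cl (Or.inl this))
        have hD₂c : Coherent D₂ := by
          rcases h₂ with h | h
          · exact h
          · exfalso
            rw [Set.mem_singleton_iff] at h
            have : (0 : Ω → ℝ) ∈ M := ⟨h ▸ Bdd_zero, h0Lx⟩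
            exact hRcoh.2.2.1 (subset_Cl (Or.inr this))
        have hAR : A ⊆ R := Set.subset_union_left.trans subset_Cl
        have hMR : M ⊆ R := Set.subset_union_right.trans subset_Cl
        -- A is a cone
        have hAadd : ∀ {a b : Ω → ℝ}, a ∈ A → b ∈ A → a + b ∈ A := by
          intro a b ha hb
          exact ⟨hD₁c.2.2.2.1 a b ha.1 hb.1, Bdd_add ha.2.1 hb.2.1,
            fun p q h => by
              simp only [Pi.add_apply, ha.2.2 p q h, hb.2.2 p q h]⟩
        have hAsmul : ∀ (c : ℝ) {a : Ω → ℝ}, a ∈ A → 0 < c → c • a ∈ A := by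
          intro c a ha hc
          exact ⟨hD₁c.2.2.2.2 c a ha.1 hc, Bdd_smul c ha.2.1,
            fun p q h => by simp only [Pi.smul_apply, ha.2.2 p q h]⟩
        -- key: no nontrivial zero sums from A ∪ D₂
        have key : ∀ a d : Ω → ℝ, (a ∈ A ∨ a = 0) → (d ∈ D₂ ∨ d = 0) →
            a + d = 0 → a = 0 ∧ d = 0 := by
          intro a d ha hd h0
          rcases hd with hd | rfl
          · rcases ha with haA | rfl
            · exfalso
              have hda : d = -a := eq_neg_of_add_eq_zero_right h0
              have hdM : d ∈ M := ⟨hd, hda ▸ Bdd_neg haA.2.1,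
                fun p q h => by simp only [hda, Pi.neg_apply, haA.2.2 p q h]⟩
              have : (0 : Ω → ℝ) ∈ R := by
                have := hRcoh.2.2.2.1 a d (hAR haA) (hMR hdM)
                rwa [h0] at this
              exact hRcoh.2.2.1 this
            · exfalso
              rw [zero_add] at h0
              exact hD₂c.2.2.1 (h0 ▸ hd)
          · rw [add_zero] at h0
            exact ⟨h0, rfl⟩
        have keyA : ∀ {a b : Ω → ℝ}, (a ∈ A ∨ a = 0) → (b ∈ A ∨ b = 0) →
            a + b = 0 → a = 0 ∧ b = 0 := by
          intro a b ha hb h0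
          have h0A : (0 : Ω → ℝ) ∉ A := fun h => hD₁c.2.2.1 h.1
          rcases ha with ha | rfl
          · rcases hb with hb | rfl
            · exact absurd (h0 ▸ hAadd ha hb) h0A
            · rw [add_zero] at h0
              exact absurd (h0 ▸ ha) h0A
          · rw [zero_add] at h0
            exact ⟨rfl, h0⟩
        have keyD : ∀ {a b : Ω → ℝ}, (a ∈ D₂ ∨ a = 0) → (b ∈ D₂ ∨ b = 0) →
            a + b = 0 → a = 0 ∧ b = 0 := by
          intro a b ha hb h0
          rcases ha with ha | rfl
          · rcases hb with hb | rfl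
            · exact absurd (h0 ▸ hD₂c.2.2.2.1 a b ha hb) hD₂c.2.2.1
            · rw [add_zero] at h0
              exact absurd (h0 ▸ ha) hD₂c.2.2.1
          · rw [zero_add] at h0
            exact ⟨rfl, h0⟩
        -- the coherent set F generated by A ∪ D₂
        set F : Set (Ω → ℝ) :=
          {f | f ≠ 0 ∧ ∃ a d : Ω → ℝ, (a ∈ A ∨ a = 0) ∧ (d ∈ D₂ ∨ d = 0) ∧ f = a + d}
          with hFdef
        have hFcoh : Coherent F := by
          refine ⟨?_, ?_, ?_, ?_, ?_⟩
          · rintro f ⟨-, a, d, ha, hd, rfl⟩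
            have haL : Bdd a := by rcases ha with h | rfl; exacts [hAL h, Bdd_zero]
            have hdL : Bdd d := by rcases hd with h | rfl; exacts [hD₂L h, Bdd_zero]
            exact Bdd_add haL hdL
          · intro p hp
            exact ⟨hp.2.2, 0, p, Or.inr rfl, Or.inl (hD₂c.2.1 hp), (zero_add p).symm⟩
          · exact fun h => h.1 rfl
          · rintro f g ⟨hf0, a, d, ha, hd, rfl⟩ ⟨hg0, a', d', ha', hd', rfl⟩
            have haa' : a + a' ∈ A ∨ a + a' = 0 := by
              rcases ha with ha | rfl
              · rcases ha' with ha' | rfl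
                · exact Or.inl (hAadd ha ha')
                · rw [add_zero]; exact Or.inl ha
              · rw [zero_add]; exact ha'
            have hdd' : d + d' ∈ D₂ ∨ d + d' = 0 := by
              rcases hd with hd | rfl
              · rcases hd' with hd' | rfl
                · exact Or.inl (hD₂c.2.2.2.1 d d' hd hd')
                · rw [add_zero]; exact Or.inl hd
              · rw [zero_add]; exact hd'
            have heq : (a + d) + (a' + d') = (a + a') + (d + d') := by ring
            refine ⟨?_, a + a', d + d', haa', hdd', heq⟩
            intro h0
            rw [heq] at h0
            obtain ⟨hz1, hz2⟩ := key _ _ haa' hdd' h0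
            obtain ⟨hza, hza'⟩ := keyA ha ha' hz1
            obtain ⟨hzd, hzd'⟩ := keyD hd hd' hz2
            exact hf0 (by rw [hza, hzd, add_zero])
          · rintro c f ⟨hf0, a, d, ha, hd, rfl⟩ hc
            have hca : c • a ∈ A ∨ c • a = 0 := by
              rcases ha with ha | rfl
              · exact Or.inl (hAsmul c ha hc)
              · rw [smul_zero]; exact Or.inr rfl
            have hcd : c • d ∈ D₂ ∨ c • d = 0 := by
              rcases hd with hd | rfl
              · exact Or.inl (hD₂c.2.2.2.2 c d hd hc)
              · rw [smul_zero]; exact Or.inr rfl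
            refine ⟨?_, c • a, c • d, hca, hcd, smul_add c a d⟩
            intro h0
            apply hf0
            funext ω
            have := congrFun h0 ω
            simp only [Pi.smul_apply, smul_eq_mul, Pi.zero_apply] at this ⊢
            rcases mul_eq_zero.mp this with h | h
            · exact absurd h (ne_of_gt hc)
            · exact h
        have hTF : Cl (A ∪ D₂) ⊆ F := by
          refine Cl_subset_mem (Or.inl hFcoh) (Set.union_subset ?_ ?_)
          · intro a ha
            exact ⟨fun h => hD₁c.2.2.1 (h ▸ ha).1,
              a, 0, Or.inl ha, Or.inr rfl, (add_zero a).symm⟩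
          · intro d hd
            exact ⟨fun h => hD₂c.2.2.1 (h ▸ hd),
              0, d, Or.inr rfl, Or.inl hd, (zero_add d).symm⟩
        rintro f ⟨hfT, hfLx⟩
        obtain ⟨hne, a, d, ha, hd, rfl⟩ := hTF hfT
        have haLx : a ∈ Lx x ∨ a = 0 := by
          rcases ha with h | rfl
          · exact Or.inl h.2
          · exact Or.inr rfl
        have hdR : d ∈ R ∨ d = 0 := by
          rcases hd with hd | rfl
          · left
            apply hMR
            refine ⟨hd, ?_, ?_⟩
            · have haB : Bdd a := by
                rcases ha with h | rfl; exacts [hAL h, Bdd_zero]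
              have : d = (a + d) + (-a) := by ring
              rw [this]
              exact Bdd_add hfLx.1 (Bdd_neg haB)
            · intro p q h
              have h1 := hfLx.2 p q h
              simp only [Pi.add_apply] at h1
              rcases haLx with hax | rfl
              · have h2 := hax.2 p q h
                linarith
              · simpa using h1
          · exact Or.inr rfl
        have haR : a ∈ R ∨ a = 0 := by
          rcases ha with h | rfl
          · exact Or.inl (hAR h)
          · exact Or.inr rfl
        rcases haR with haR | rfl
        · rcases hdR with hdR | rfl
          · exact hRcoh.2.2.2.1 a d haR hdR
          · rwa [add_zero]
        · rcases hdR with hdR | rfl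
          · rwa [zero_add]
          · simp at hne
      · rw [Set.mem_singleton_iff] at hRtop
        rw [hRtop]
        exact Set.inter_subset_left.trans (Cl_subset_L (Set.union_subset hAL hD₂L))
    · refine Cl_mono (Set.union_subset ?_ ?_)
      · exact Set.subset_inter (Set.subset_union_left.trans subset_Cl)
          Set.inter_subset_right
      · exact Set.subset_inter
          ((Set.inter_subset_left.trans Set.subset_union_right).trans subset_Cl)
          Set.inter_subset_right
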